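/- For all integers d ≥ 2 and 1 ≤ i ≤ d−1, the binomial determinants satisfy the Pascal-type recurrence 2 · D_{d,i} = 2^{d−1} · D_{d−1,i−1} + 2^{d} · D_{d−1,i}; equivalently, the normalized determinants D'_{d,i} = D_{d,i} / 2^{d(d−1)/2 − i} satisfy D'_{d,i} = D'_{d−1,i−1} + D'_{d−1,i}. -/

import Mathlib

/-!
Write `v_t = (C(n+t, 2k))_{k ≤ n}` for `t = 0, …, n+1`, so that `D_{n+1,i}` is the maximal minor
of these `n+2` rows omitting `v_i`. Since `C(n+t, 2k) = [x^{2k}] (1+x)^{n+t}`, the rows satisfy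
`∑ (-1)^t w_t v_t = 0` with `w_t = [y^t] (1+y)(2+y)^n`: substituting `y = -(1+x)` turns
`(1+x)^n (1+y)(2+y)^n` into `-x(1-x^2)^n`, which has no even coefficients. Replacing one row of a
minor by this relation gives `w_j D_{n+1,j+1} = w_{j+1} D_{n+1,j}`; as the `w_t` are positive and
`w_{n+1} = 1`, this yields `D_{n+1,i} = D_{n+1,n+1} w_i = D_{n,0} w_i`, the last column of
`D_{n+1,n+1}` being a unit vector. The recurrence is then Pascal's rule
`[y^i] (2+y)P = [y^{i-1}] P + 2 [y^i] P`, together with `D_{n+1,0} = 2^n D_{n,0}`.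
-/

/-- The binomial determinant `D_{d,i}`: the `d × d` determinant whose `(j,k)` entry
(for `0 ≤ j, k ≤ d−1`) is `C(a_j, 2k)`, where `a_j = d−1+j` if `j < i` and
`a_j = d+j` if `j ≥ i`; i.e. rows indexed by `d−1, d, …, 2d−1` with `d−1+i` omitted,
columns by `0, 2, …, 2(d−1)`. -/
def binomDet (d i : ℕ) : ℤ :=
  Matrix.det (Matrix.of fun j k : Fin d =>
    ((if (j : ℕ) < i then d - 1 + (j : ℕ) else d + (j : ℕ)).choose (2 * (k : ℕ)) : ℤ))

open Polynomial Finset Matrix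

theorem adjacent_minors_of_sum_smul_eq_zero {R : Type*} [CommRing R] {n : ℕ}
    (v : Fin (n + 1) → Fin n → R) (c : Fin (n + 1) → R) (hc : ∑ t, c t • v t = 0) (j : Fin n) :
    c j.castSucc * det (of fun r => v (j.succ.succAbove r)) +
      c j.succ * det (of fun r => v (j.castSucc.succAbove r)) = 0 := by
  set A : Matrix (Fin n) (Fin n) R := of fun r => v (j.succ.succAbove r)
  have hexpand :
      det (A.updateRow j (∑ t, c t • v t)) = ∑ t, c t * det (A.updateRow j (v t)) :=
    ((detRowAlternating (n := Fin n)).map_update_sum Finset.univ j _ A).trans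
      (Finset.sum_congr rfl fun t _ => AlternatingMap.map_update_smul _ _ _ _ _)
  have hvanish : ∀ t, t ≠ j.castSucc ∧ t ≠ j.succ → c t * det (A.updateRow j (v t)) = 0 := by
    rintro t ⟨h1, h2⟩
    obtain ⟨r, rfl⟩ := Fin.exists_succAbove_eq h2
    have hr : r ≠ j := by rintro rfl; simp at h1
    rw [det_zero_of_row_eq hr (by rw [updateRow_ne hr, updateRow_self]; rfl), mul_zero]
  have hA : A.updateRow j (v j.castSucc) = A := by
    rw [← Fin.succAbove_succ_self j]
    exact updateRow_eq_self A j
  have hB : A.updateRow j (v j.succ) = of fun r => v (j.castSucc.succAbove r) := by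
    ext r k
    rcases lt_trichotomy r j with h | rfl | h
    · simp [A, h.ne, Fin.succAbove_succ_of_le _ _ h.le, Fin.succAbove_castSucc_of_lt _ _ h]
    · simp
    · simp [A, h.ne', Fin.succAbove_succ_of_lt _ _ h, Fin.succAbove_castSucc_of_le _ _ h.le]
  rw [← hA, ← hB, ← Fintype.sum_eq_add _ _ (Fin.castSucc_lt_succ (i := j)).ne hvanish, ← hexpand,
    hc]
  exact det_eq_zero_of_row_eq_zero j (by simp)

theorem coeff_X_mul_expand_two_even {R : Type*} [CommSemiring R] (p : R[X]) (k : ℕ) :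
    (X * expand R 2 p).coeff (2 * k) = 0 := by
  cases k with
  | zero => exact coeff_X_mul_zero _
  | succ k =>
    rw [show 2 * (k + 1) = (2 * k + 1) + 1 by ring, coeff_X_mul, coeff_expand two_pos,
      if_neg (by omega)]

noncomputable def relationPoly (n : ℕ) : ℤ[X] := (X + 1) * (X + 2) ^ n

theorem natDegree_relationPoly_le (n : ℕ) : (relationPoly n).natDegree ≤ n + 1 := by
  unfold relationPoly; compute_degree!; omega

theorem coeff_relationPoly_zero (n : ℕ) : (relationPoly n).coeff 0 = 2 ^ n := by
  simp [relationPoly, coeff_zero_eq_eval_zero]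

theorem coeff_relationPoly_succ (n i : ℕ) :
    (relationPoly n).coeff (i + 1) =
      2 ^ (n - i) * n.choose i + 2 ^ (n - (i + 1)) * n.choose (i + 1) := by
  rw [relationPoly, ← C_ofNat (R := ℤ) 2, add_mul, one_mul, coeff_add, coeff_X_mul,
    coeff_X_add_C_pow, coeff_X_add_C_pow]

theorem coeff_relationPoly_pos {n i : ℕ} (hi : i ≤ n + 1) : 0 < (relationPoly n).coeff i := by
  cases i with
  | zero => rw [coeff_relationPoly_zero]; positivity
  | succ i =>
    have := Nat.choose_pos (show i ≤ n by omega)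
    rw [coeff_relationPoly_succ]
    positivity

theorem coeff_relationPoly_top (n : ℕ) : (relationPoly n).coeff (n + 1) = 1 := by
  simp [coeff_relationPoly_succ]

theorem coeff_relationPoly_succ_succ (n j : ℕ) :
    (relationPoly (n + 1)).coeff (j + 1) =
      (relationPoly n).coeff j + 2 * (relationPoly n).coeff (j + 1) := by
  rw [show relationPoly (n + 1) = (X + 2) * relationPoly n by unfold relationPoly; ring,
    add_mul, coeff_add, coeff_X_mul, ← C_ofNat, coeff_C_mul]

theorem sum_relationPoly_mul_one_add_X_pow (n : ℕ) :
    ∑ t ∈ range (n + 2), C ((-1) ^ t * (relationPoly n).coeff t) * (1 + X) ^ (n + t) =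
      -(X * expand ℤ 2 ((1 - X) ^ n)) := by
  have hcomp : (relationPoly n).comp (-(1 + X)) =
      ∑ t ∈ range (n + 2), C ((relationPoly n).coeff t) * (-(1 + X)) ^ t :=
    eval₂_eq_sum_range' C (by linarith [natDegree_relationPoly_le n]) _
  have hsubst :
      (1 + X) ^ n * (relationPoly n).comp (-(1 + X)) = -(X * expand ℤ 2 ((1 - X) ^ n)) := by
    simp only [relationPoly, mul_comp, pow_comp, add_comp, X_comp, one_comp, ofNat_comp, map_pow,
      map_sub, map_one, expand_X]
    rw [show (1 - X ^ 2 : ℤ[X]) = (1 - X) * (1 + X) by ring, mul_pow]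
    ring
  rw [← hsubst, hcomp, mul_sum]
  refine sum_congr rfl fun t _ => ?_
  rw [neg_pow (1 + X : ℤ[X]), C_mul, map_pow, map_neg, C_1, pow_add]
  ring

theorem sum_relationPoly_mul_choose (n k : ℕ) :
    ∑ t ∈ range (n + 2), (-1) ^ t * (relationPoly n).coeff t * ((n + t).choose (2 * k) : ℤ) =
      0 := by
  have h := congrArg (coeff · (2 * k)) (sum_relationPoly_mul_one_add_X_pow n)
  simpa only [finsetSum_coeff, coeff_C_mul, coeff_one_add_X_pow, coeff_neg,
    coeff_X_mul_expand_two_even, neg_zero] using h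

def binomRow (n t : ℕ) : Fin (n + 1) → ℤ := fun k => ((n + t).choose (2 * k) : ℤ)

theorem binomDet_succ_eq_det_succAbove (n : ℕ) (i : Fin (n + 2)) :
    binomDet (n + 1) i = det (of fun r => binomRow n (i.succAbove r)) := by
  unfold binomDet binomRow
  congr 1
  ext r k
  simp only [of_apply, Fin.succAbove, Fin.lt_def, Fin.val_castSucc]
  split_ifs
  · simp
  · simp [add_assoc, add_comm 1]

theorem sum_smul_binomRow_eq_zero (n : ℕ) :
    ∑ t : Fin (n + 2), ((-1) ^ (t : ℕ) * (relationPoly n).coeff t) • binomRow n t = 0 := by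
  ext k
  have h := sum_relationPoly_mul_choose n k
  rw [← Fin.sum_univ_eq_sum_range] at h
  simpa [binomRow] using h

theorem coeff_mul_binomDet_succ_succ {n j : ℕ} (hj : j ≤ n) :
    (relationPoly n).coeff j * binomDet (n + 1) (j + 1) =
      (relationPoly n).coeff (j + 1) * binomDet (n + 1) j := by
  have h := adjacent_minors_of_sum_smul_eq_zero _ _ (sum_smul_binomRow_eq_zero n)
    (⟨j, by omega⟩ : Fin (n + 1))
  rw [← binomDet_succ_eq_det_succAbove, ← binomDet_succ_eq_det_succAbove] at h
  simp only [Fin.val_castSucc, Fin.val_succ, pow_succ] at h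
  have hsign : (-1 : ℤ) ^ j ≠ 0 := pow_ne_zero _ (by norm_num)
  refine sub_eq_zero.mp ((mul_eq_zero.mp ?_).resolve_left hsign)
  linear_combination h

theorem binomDet_succ_self (n : ℕ) : binomDet (n + 1) (n + 1) = binomDet n 0 := by
  have hlast : binomDet (n + 1) (n + 1) =
      det (of fun j k : Fin (n + 1) => ((n + j).choose (2 * k) : ℤ)) := by
    unfold binomDet
    congr
    ext j k
    simp [j.isLt]
  have hzero : binomDet n 0 = det (of fun j k : Fin n => ((n + j).choose (2 * k) : ℤ)) := by
    simp [binomDet]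
  rw [hlast, hzero, det_succ_column _ (Fin.last n), Fintype.sum_eq_single (Fin.last n)]
  · simp [← two_mul]
    rfl
  · intro r hr
    have : (r : ℕ) < n := Fin.val_lt_last hr
    simp [Nat.choose_eq_zero_of_lt (show n + (r : ℕ) < 2 * n by omega)]

theorem binomDet_succ_eq_mul_coeff {n i : ℕ} (hi : i ≤ n + 1) :
    binomDet (n + 1) i = binomDet n 0 * (relationPoly n).coeff i := by
  induction hi using Nat.decreasingInduction with
  | self => rw [binomDet_succ_self, coeff_relationPoly_top, mul_one]
  | of_succ j hj ih =>
    have hpos := coeff_relationPoly_pos (n := n) (i := j + 1) hj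
    refine mul_left_cancel₀ hpos.ne' ?_
    linear_combination -(coeff_mul_binomDet_succ_succ (show j ≤ n by omega)) +
      (relationPoly n).coeff j * ih

theorem binomDet_pascal_recurrence_general (d i : ℕ) (hi1 : 1 ≤ i) (hi2 : i ≤ d - 1) :
    2 * binomDet d i = 2 ^ (d - 1) * binomDet (d - 1) (i - 1) + 2 ^ d * binomDet (d - 1) i := by
  obtain ⟨n, rfl⟩ : ∃ n, d = n + 2 := ⟨d - 2, by omega⟩
  obtain ⟨m, rfl⟩ : ∃ m, i = m + 1 := ⟨i - 1, by omega⟩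
  simp only [show n + 2 - 1 = n + 1 by omega, Nat.add_sub_cancel] at hi2 ⊢
  rw [binomDet_succ_eq_mul_coeff (n := n + 1) (by omega),
    binomDet_succ_eq_mul_coeff (n := n) (by omega : 0 ≤ n + 1),
    binomDet_succ_eq_mul_coeff (n := n) (by omega : m ≤ n + 1),
    binomDet_succ_eq_mul_coeff (n := n) hi2,
    coeff_relationPoly_succ_succ, coeff_relationPoly_zero]
  ring

/-- Theorem: for `d ≥ 2` and `1 ≤ i ≤ d−1`, the binomial determinants satisfy the
Pascal-type recurrence `2 · D_{d,i} = 2^{d−1} · D_{d−1,i−1} + 2^{d} · D_{d−1,i}`;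
equivalently, the normalized determinants `D'_{d,i} = D_{d,i} / 2^{d(d−1)/2 − i}`
satisfy `D'_{d,i} = D'_{d−1,i−1} + D'_{d−1,i}`. -/
theorem binomDet_pascal_recurrence (d i : ℕ) (hd : 2 ≤ d) (hi1 : 1 ≤ i) (hi2 : i ≤ d - 1) :
    2 * binomDet d i = 2 ^ (d - 1) * binomDet (d - 1) (i - 1) + 2 ^ d * binomDet (d - 1) i :=
  binomDet_pascal_recurrence_general d i hi1 hi2
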